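/- Let cap be a nonnegative, monotone, countably subadditive set function on the Borel σ-algebra of a topological space Q. Then every signed Borel measure μ of bounded variation on Q admits a unique decomposition μ = μ_d + μ_c, where μ_d vanishes on every Borel set B with cap(B) = 0, and μ_c is concentrated on some Borel set N with cap(N) = 0. -/

import Mathlib

/-!
Let `ν = |μ|` and pick, among measurable `cap`-null sets, one set `N` of maximal `ν`-measure; the
maximum is attained because `cap`-null sets are closed under countable unions and `ν` is finite.
By maximality `ν` vanishes on every measurable `cap`-null set disjoint from `N`, so
`μ = μ|_{Nᶜ} + μ|_N` is a decomposition. For two decompositions concentrated on `N₁` and `N₂`, the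
set `M = N₁ ∪ N₂` is still `cap`-null, and restricting either decomposition to `M` shows that its
concentrated part is `μ|_M`.
-/

open MeasureTheory Set ENNReal

theorem Set.union_mem_of_forall_iUnion_mem {α : Type*} {S : Set (Set α)}
    (hS : ∀ f : ℕ → Set α, (∀ n, f n ∈ S) → ⋃ n, f n ∈ S) {s t : Set α} (hs : s ∈ S)
    (ht : t ∈ S) : s ∪ t ∈ S := by
  have h := hS (fun n => Nat.casesOn n s fun _ => t) (by rintro (_ | _) <;> assumption)
  rwa [← union_iUnion_nat_succ, iUnion_const] at h

namespace MeasureTheory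

variable {α : Type*} [MeasurableSpace α]

theorem Measure.exists_mem_forall_measure_sdiff_eq_zero (ν : Measure α) [IsFiniteMeasure ν]
    {S : Set (Set α)} (hS : ∀ s ∈ S, MeasurableSet s) (hne : S.Nonempty)
    (hiUnion : ∀ f : ℕ → Set α, (∀ n, f n ∈ S) → ⋃ n, f n ∈ S) :
    ∃ N ∈ S, ∀ C ∈ S, ν (C \ N) = 0 := by
  obtain ⟨u, -, hu, huS⟩ := exists_seq_tendsto_sSup (hne.image ν) (OrderTop.bddAbove _)
  choose B hBS hBu using huS
  have hNS : ⋃ n, B n ∈ S := hiUnion B hBS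
  have hN_max : ν (⋃ n, B n) = sSup (ν '' S) :=
    le_antisymm (le_sSup (mem_image_of_mem ν hNS))
      (le_of_tendsto' hu fun n => hBu n ▸ measure_mono (subset_iUnion B n))
  refine ⟨_, hNS, fun C hC => ?_⟩
  have hle : ν (⋃ n, B n) + ν (C \ ⋃ n, B n) ≤ ν (⋃ n, B n) + 0 := by
    rw [measure_add_sdiff (hS _ hNS).nullMeasurableSet, add_zero, hN_max]
    exact le_sSup (mem_image_of_mem ν (union_mem_of_forall_iUnion_mem hiUnion hNS hC))
  exact nonpos_iff_eq_zero.1 ((ENNReal.add_le_add_iff_left (measure_ne_top ν _)).1 hle)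

namespace VectorMeasure

variable {M : Type*} [AddCommMonoid M] [TopologicalSpace M]

theorem restrict_eq_self_iff {v : VectorMeasure α M} {N : Set α} (hN : MeasurableSet N) :
    v.restrict N = v ↔ ∀ A, MeasurableSet A → v A = v (A ∩ N) := by
  rw [ext_iff]
  refine forall₂_congr fun A hA => ?_
  rw [restrict_apply v hN hA, eq_comm]

theorem eq_restrict_of_add_eq [ContinuousAdd M] {μ d c : VectorMeasure α M} {s : Set α}
    (h : μ = d + c) (hd : d.restrict s = 0) (hc : c.restrict s = c) : c = μ.restrict s := by
  rw [h, restrict_add, hd, zero_add, hc]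

end VectorMeasure

section Capacity

variable {cap : Set α → ℝ≥0∞}

def measurableNullSets (cap : Set α → ℝ≥0∞) : Set (Set α) :=
  {B | MeasurableSet B ∧ cap B = 0}

def IsCapDecomposition (cap : Set α → ℝ≥0∞) (μ d c : SignedMeasure α) : Prop :=
  μ = d + c ∧ (∀ B : Set α, MeasurableSet B → cap B = 0 → d B = 0) ∧
    ∃ N : Set α, MeasurableSet N ∧ cap N = 0 ∧ ∀ A : Set α, MeasurableSet A → c A = c (A ∩ N)

theorem iUnion_mem_measurableNullSets
    (hsub : ∀ A : ℕ → Set α, cap (⋃ i, A i) ≤ ∑' i, cap (A i))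
    (f : ℕ → Set α) (hf : ∀ n, f n ∈ measurableNullSets cap) :
    ⋃ n, f n ∈ measurableNullSets cap :=
  ⟨.iUnion fun n => (hf n).1,
    nonpos_iff_eq_zero.1 <| (hsub f).trans_eq <| ENNReal.tsum_eq_zero.2 fun n => (hf n).2⟩

theorem exists_isCapDecomposition (hempty : cap ∅ = 0)
    (hsub : ∀ A : ℕ → Set α, cap (⋃ i, A i) ≤ ∑' i, cap (A i)) (μ : SignedMeasure α) :
    ∃ p : SignedMeasure α × SignedMeasure α, IsCapDecomposition cap μ p.1 p.2 := by
  obtain ⟨N, ⟨hN, hNcap⟩, hN_max⟩ :=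
    μ.totalVariation.exists_mem_forall_measure_sdiff_eq_zero (S := measurableNullSets cap)
      (fun _ hs => hs.1) ⟨∅, .empty, hempty⟩ (iUnion_mem_measurableNullSets hsub)
  refine ⟨(μ.restrict Nᶜ, μ.restrict N), ?_, fun B hB hBcap => ?_, N, hN, hNcap, ?_⟩
  · rw [add_comm, VectorMeasure.restrict_add_restrict_compl hN]
  · rw [VectorMeasure.restrict_apply _ hN.compl hB, ← sdiff_eq]
    exact μ.null_of_totalVariation_zero (hN_max B ⟨hB, hBcap⟩)
  · rw [← VectorMeasure.restrict_eq_self_iff hN, VectorMeasure.restrict_restrict _ hN hN,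
      inter_self]

theorem IsCapDecomposition.exists_forall_eq_restrict
    (hmono : ∀ A B : Set α, A ⊆ B → cap A ≤ cap B)
    {μ d c : SignedMeasure α} (h : IsCapDecomposition cap μ d c) :
    ∃ N, MeasurableSet N ∧ cap N = 0 ∧
      ∀ M ⊇ N, M ∈ measurableNullSets cap → c = μ.restrict M := by
  obtain ⟨hμ, hd, N, hN, hNcap, hc⟩ := h
  refine ⟨N, hN, hNcap, fun M hNM ⟨hM, hMcap⟩ => VectorMeasure.eq_restrict_of_add_eq hμ ?_ ?_⟩
  · ext A hA
    rw [VectorMeasure.restrict_apply _ hM hA, zero_apply]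
    exact hd _ (hA.inter hM) (nonpos_iff_eq_zero.1 (hMcap ▸ hmono _ _ inter_subset_right))
  · rw [VectorMeasure.restrict_eq_self_iff hM]
    intro A hA
    rw [hc A hA, hc _ (hA.inter hM), inter_assoc, inter_eq_right.2 hNM]

theorem IsCapDecomposition.unique (hmono : ∀ A B : Set α, A ⊆ B → cap A ≤ cap B)
    (hsub : ∀ A : ℕ → Set α, cap (⋃ i, A i) ≤ ∑' i, cap (A i)) {μ d₁ c₁ d₂ c₂ : SignedMeasure α}
    (h₁ : IsCapDecomposition cap μ d₁ c₁) (h₂ : IsCapDecomposition cap μ d₂ c₂) :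
    d₁ = d₂ ∧ c₁ = c₂ := by
  obtain ⟨N₁, hN₁, hN₁cap, hc₁⟩ := h₁.exists_forall_eq_restrict hmono
  obtain ⟨N₂, hN₂, hN₂cap, hc₂⟩ := h₂.exists_forall_eq_restrict hmono
  have hM : N₁ ∪ N₂ ∈ measurableNullSets cap :=
    union_mem_of_forall_iUnion_mem (iUnion_mem_measurableNullSets hsub) ⟨hN₁, hN₁cap⟩
      ⟨hN₂, hN₂cap⟩
  have hc : c₁ = c₂ :=
    (hc₁ _ subset_union_left hM).trans (hc₂ _ subset_union_right hM).symm
  refine ⟨?_, hc⟩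
  rw [← add_right_cancel_iff (a := c₁), ← h₁.1, hc, ← h₂.1]

end Capacity

end MeasureTheory

theorem stmt4_general {Q : Type*} [MeasurableSpace Q]
    (cap : Set Q → ENNReal)
    (hempty : cap ∅ = 0)
    (hmono : ∀ A B : Set Q, A ⊆ B → cap A ≤ cap B)
    (hsub : ∀ A : ℕ → Set Q, cap (⋃ i, A i) ≤ ∑' i, cap (A i))
    (μ : SignedMeasure Q) :
    ∃! p : SignedMeasure Q × SignedMeasure Q,
      μ = p.1 + p.2 ∧
      (∀ B : Set Q, MeasurableSet B → cap B = 0 → p.1 B = 0) ∧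
      (∃ N : Set Q, MeasurableSet N ∧ cap N = 0 ∧
        ∀ A : Set Q, MeasurableSet A → p.2 A = p.2 (A ∩ N)) :=
  existsUnique_of_exists_of_unique (exists_isCapDecomposition hempty hsub μ) fun _ _ hp hq =>
    Prod.ext_iff.2 (IsCapDecomposition.unique hmono hsub hp hq)

theorem stmt4 {Q : Type*} [TopologicalSpace Q] [MeasurableSpace Q] [BorelSpace Q]
    (cap : Set Q → ENNReal)
    (hempty : cap ∅ = 0)
    (hmono : ∀ A B : Set Q, A ⊆ B → cap A ≤ cap B)
    (hsub : ∀ A : ℕ → Set Q, cap (⋃ i, A i) ≤ ∑' i, cap (A i))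
    (μ : SignedMeasure Q) :
    ∃! p : SignedMeasure Q × SignedMeasure Q,
      μ = p.1 + p.2 ∧
      (∀ B : Set Q, MeasurableSet B → cap B = 0 → p.1 B = 0) ∧
      (∃ N : Set Q, MeasurableSet N ∧ cap N = 0 ∧
        ∀ A : Set Q, MeasurableSet A → p.2 A = p.2 (A ∩ N)) :=
  stmt4_general cap hempty hmono hsub μ
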